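/- arXiv:2003.00565 — 4 statements merged into one kernel-verified Lean document; each statement's English description precedes it below -/
import Mathlib

section
/- Let N ≥ 1, let L be a real symmetric N×N positive semidefinite matrix with L·𝟏 = 0 and kernel exactly the span of 𝟏, let k be an index, h > 0, Δ = h·e_k e_kᵀ, and let P_T, δ be real numbers. Define S(t) = (P_T + δ)·𝟏 + exp(−t(L + Δ))·(−δ·𝟏). Then: (i) S(0) = P_T·𝟏; (ii) for every t, S satisfies the differential equation S′(t) = −(L + Δ)·S(t) + h·(P_T + δ)·e_k; and (iii) S(t) converges to (P_T + δ)·𝟏 as t → ∞. In other words, all entries of S(t) reach consensus on the updated total capacity P_T + δ. -/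
/-!
`M = L + Δ` is positive definite: both summands are positive semidefinite, and a common
null vector would be a constant vector `c𝟏` with `h c = 0`. Diagonalizing `M` orthogonally,
`exp(-tM)` is conjugate to `diag(e^{-tλᵢ})` with all `λᵢ > 0`, hence tends to `0`. The ODE
comes from `d/dt exp(-tM)v = -M exp(-tM)v` and `M𝟏 = h eₖ`, which makes the constant part of
`S` cancel against the forcing term.
-/

open Matrix Filter Topology

namespace Matrix

variable {n : Type*} [Fintype n]

section PosSemidef

open scoped ComplexOrder

variable {𝕜 : Type*} [RCLike 𝕜]

theorem PosSemidef.posDef_add {A B : Matrix n n 𝕜} (hA : A.PosSemidef) (hB : B.PosSemidef)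
    (hAB : ∀ x, A *ᵥ x = 0 → B *ᵥ x = 0 → x = 0) : (A + B).PosDef := by
  refine posDef_iff_dotProduct_mulVec.2 ⟨hA.1.add hB.1, fun x hx => ?_⟩
  have hqA := hA.dotProduct_mulVec_nonneg x
  have hqB := hB.dotProduct_mulVec_nonneg x
  rw [add_mulVec, dotProduct_add]
  refine (add_nonneg hqA hqB).lt_of_ne' fun hq => hx ?_
  obtain ⟨hxA, hxB⟩ := (add_eq_zero_iff_of_nonneg hqA hqB).1 hq
  exact hAB x ((hA.dotProduct_mulVec_zero_iff x).1 hxA) ((hB.dotProduct_mulVec_zero_iff x).1 hxB)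

theorem PosSemidef.posDef_add_single_of_ker_const [DecidableEq n] {L : Matrix n n 𝕜}
    (hL : L.PosSemidef)
    (hker : ∀ u : n → 𝕜, L *ᵥ u = 0 → ∃ c : 𝕜, u = fun _ => c) (k : n) {h : 𝕜} (hh : 0 < h) :
    (L + single k k h).PosDef := by
  refine hL.posDef_add ?_ fun x hLx hx => ?_
  · rw [← diagonal_single, posSemidef_diagonal_iff]
    intro i
    rcases eq_or_ne i k with rfl | hi
    · simpa using hh.le
    · simp [hi]
  · obtain ⟨c, rfl⟩ := hker x hLx
    have hc : h * c = 0 := by simpa [single_mulVec_eq] using congrFun hx k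
    exact funext fun _ => (mul_eq_zero.1 hc).resolve_left hh.ne'

end PosSemidef

variable [DecidableEq n]

theorem IsHermitian.exp_smul_eq {A : Matrix n n ℝ} (hA : A.IsHermitian) (t : ℝ) :
    NormedSpace.exp (t • A) = (hA.eigenvectorUnitary : Matrix n n ℝ) *
      diagonal (fun i => Real.exp (t * hA.eigenvalues i)) *
        star (hA.eigenvectorUnitary : Matrix n n ℝ) := by
  set U : Matrix n n ℝ := (hA.eigenvectorUnitary : Matrix n n ℝ)
  have hU : IsUnit U := (Unitary.toUnits hA.eigenvectorUnitary).isUnit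
  have hUinv : U⁻¹ = star U := inv_eq_left_inv (Unitary.coe_star_mul_self _)
  have hconj : t • A = U * diagonal (fun i => t * hA.eigenvalues i) * U⁻¹ := by
    have hdiag : diagonal (fun i => t * hA.eigenvalues i) =
        t • diagonal (RCLike.ofReal ∘ hA.eigenvalues) := by
      rw [← diagonal_smul]; rfl
    conv_lhs => rw [hA.spectral_theorem]
    rw [hdiag, Unitary.conjStarAlgAut_apply, hUinv, Matrix.mul_smul, Matrix.smul_mul]
  rw [hconj, exp_conj _ _ hU, exp_diagonal, hUinv, Pi.exp_def, Real.exp_eq_exp_ℝ]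

theorem PosDef.tendsto_exp_neg_smul_atTop {A : Matrix n n ℝ} (hA : A.PosDef) :
    Tendsto (fun t : ℝ => NormedSpace.exp (-(t • A))) atTop (𝓝 0) := by
  set U : Matrix n n ℝ := (hA.1.eigenvectorUnitary : Matrix n n ℝ)
  have hdiag : Tendsto (fun t : ℝ => fun i => Real.exp (-t * hA.1.eigenvalues i)) atTop (𝓝 0) := by
    refine tendsto_pi_nhds.2 fun i => Real.tendsto_exp_atBot.comp ?_
    simpa only [neg_mul, Function.comp_def, id] using
      tendsto_neg_atTop_atBot.comp (tendsto_id.atTop_mul_const (hA.eigenvalues_pos i))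
  have hconj : Continuous fun d : n → ℝ => U * diagonal d * star U := by fun_prop
  simpa [← neg_smul, hA.1.exp_smul_eq, Function.comp_def] using (hconj.tendsto 0).comp hdiag

theorem hasDerivAt_exp_neg_smul_mulVec (A : Matrix n n ℝ) (v : n → ℝ) (t : ℝ) :
    HasDerivAt (fun t : ℝ => NormedSpace.exp (-(t • A)) *ᵥ v)
      (-(A *ᵥ (NormedSpace.exp (-(t • A)) *ᵥ v))) t := by
  -- matrices carry no global norm; any normed-algebra structure suffices to differentiate `exp`
  let : NormedRing (Matrix n n ℝ) := Matrix.linftyOpNormedRing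
  let : NormedAlgebra ℝ (Matrix n n ℝ) := Matrix.linftyOpNormedAlgebra
  have hexp := hasDerivAt_exp_smul_const' (-A) t
  simp only [smul_neg] at hexp
  refine (((mulVecBilin ℝ ℝ).flip v).toContinuousLinearMap.hasFDerivAt.comp_hasDerivAt t
    hexp).congr_deriv ?_
  change (-A * _) *ᵥ v = _
  rw [neg_mul, neg_mulVec, mulVec_mulVec]
  rfl

end Matrix

theorem consensus_trajectory_properties_general
    (N : ℕ) (L : Matrix (Fin N) (Fin N) ℝ)
    (hpsd : L.PosSemidef)
    (hL1 : L *ᵥ (fun _ => (1 : ℝ)) = 0)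
    (hker : ∀ u : Fin N → ℝ, L *ᵥ u = 0 → ∃ c : ℝ, u = fun _ => c)
    (k : Fin N) (h : ℝ) (hh : 0 < h) (PT δ : ℝ)
    (S : ℝ → Fin N → ℝ)
    (hS : S = fun t =>
      (fun _ => PT + δ) +
        NormedSpace.exp (-(t • (L + Matrix.single k k h))) *ᵥ (fun _ => -δ)) :
    S 0 = (fun _ => PT) ∧
    (∀ t : ℝ, HasDerivAt S
        (-((L + Matrix.single k k h) *ᵥ S t) + (h * (PT + δ)) • (Pi.single k 1 : Fin N → ℝ)) t) ∧
    Filter.Tendsto S Filter.atTop (nhds (fun _ => PT + δ)) := by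
  set M := L + single k k h
  have hM1 : M *ᵥ (fun _ => 1) = h • Pi.single k 1 := by
    rw [add_mulVec, hL1, single_mulVec_eq]
    simp
  subst hS
  refine ⟨?_, fun t => ?_, ?_⟩
  · funext
    simp
  · refine ((hasDerivAt_exp_neg_smul_mulVec M (fun _ => -δ) t).const_add _).congr_deriv ?_
    have hconst : (fun _ => PT + δ : Fin N → ℝ) = (PT + δ) • fun _ => 1 := by
      funext; simp
    rw [mulVec_add, hconst, mulVec_smul, hM1, smul_smul, mul_comm (PT + δ), neg_add_rev,
      neg_add_cancel_right]
  · have hx : Tendsto (fun t : ℝ => NormedSpace.exp (-(t • M)) *ᵥ fun _ => -δ) atTop (𝓝 0) := by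
      simpa only [Function.comp_def, id, zero_mulVec] using
        ((continuous_id.matrix_mulVec (continuous_const (y := fun _ => -δ))).tendsto 0).comp
        (hpsd.posDef_add_single_of_ker_const hker k hh).tendsto_exp_neg_smul_atTop
    simpa using tendsto_const_nhds.add hx

/-- The consensus trajectory
`S(t) = (P_T+δ)·𝟏 + exp(−t(L+Δ))·(−δ·𝟏)` satisfies `S(0) = P_T·𝟏`, the ODE
`S′ = −(L+Δ)S + h(P_T+δ)e_k`, and converges to `(P_T+δ)·𝟏`. -/
theorem consensus_trajectory_properties
    (N : ℕ) (hN : 1 ≤ N) (L : Matrix (Fin N) (Fin N) ℝ)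
    (hsymm : L.IsSymm) (hpsd : L.PosSemidef)
    (hL1 : L *ᵥ (fun _ => (1 : ℝ)) = 0)
    (hker : ∀ u : Fin N → ℝ, L *ᵥ u = 0 → ∃ c : ℝ, u = fun _ => c)
    (k : Fin N) (h : ℝ) (hh : 0 < h) (PT δ : ℝ)
    (S : ℝ → Fin N → ℝ)
    (hS : S = fun t =>
      (fun _ => PT + δ) +
        NormedSpace.exp (-(t • (L + Matrix.single k k h))) *ᵥ (fun _ => -δ)) :
    S 0 = (fun _ => PT) ∧
    (∀ t : ℝ, HasDerivAt S
        (-((L + Matrix.single k k h) *ᵥ S t) + (h * (PT + δ)) • (Pi.single k 1 : Fin N → ℝ)) t) ∧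
    Filter.Tendsto S Filter.atTop (nhds (fun _ => PT + δ)) :=
  consensus_trajectory_properties_general N L hpsd hL1 hker k h hh PT δ S hS
end

section
/- Let N ≥ 2, let L be a real symmetric N×N positive semidefinite matrix with L·𝟏 = 0 and kernel exactly the span of 𝟏, let k be an index, h > 0, and Δ = h·e_k e_kᵀ. List the eigenvalues of L in nondecreasing order as 0 = λ_1(L) ≤ λ_2(L) ≤ … ≤ λ_N(L), and those of L + Δ as λ_1(L+Δ) ≤ … ≤ λ_N(L+Δ). Then 0 < λ_1(L + Δ) ≤ λ_2(L); that is, the smallest eigenvalue of the perturbed Laplacian is strictly positive and is bounded above by the second-smallest eigenvalue (algebraic connectivity) of L. -/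
/-!
The quadratic form of `L + Δ` is `xᵀ L x + h x_k²`, a sum of two nonnegative terms; if both
vanish then `x` lies in the kernel of `L`, so it is constant, and it vanishes at `k`, so `x = 0`.
Hence `L + Δ` is positive definite.

For the upper bound, take orthogonal eigenvectors `w`, `v` of `L` for `λ₁(L) ≤ λ₂(L)`. Some
nonzero combination `u` of them has `u_k = 0`, so `Δ u = 0`, and the Rayleigh quotient of `L + Δ`
at `u` equals that of `L`, which is at most `λ₂(L)` on `span {w, v}`.
-/

open Matrix

namespace Matrix

section

variable {n : Type*} [Fintype n] {A : Matrix n n ℝ} {w v : n → ℝ} {α β : ℝ}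

theorem dotProduct_mulVec_le_of_mem_span_pair (hw : A *ᵥ w = α • w) (hv : A *ᵥ v = β • v)
    (hwv : w ⬝ᵥ v = 0) (hαβ : α ≤ β) (a b : ℝ) :
    (a • w + b • v) ⬝ᵥ (A *ᵥ (a • w + b • v)) ≤ β * ((a • w + b • v) ⬝ᵥ (a • w + b • v)) := by
  simp only [mulVec_add, mulVec_smul, hw, hv, dotProduct_add, add_dotProduct, dotProduct_smul,
    smul_dotProduct, dotProduct_comm v w, hwv, smul_eq_mul]
  have hww : 0 ≤ w ⬝ᵥ w := by simpa using dotProduct_self_star_nonneg w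
  nlinarith [mul_nonneg (mul_nonneg (sq_nonneg a) (sub_nonneg.2 hαβ)) hww]

theorem exists_apply_eq_zero_dotProduct_mulVec_le (hw : A *ᵥ w = α • w) (hv : A *ᵥ v = β • v)
    (hw0 : w ≠ 0) (hv0 : v ≠ 0) (hwv : w ⬝ᵥ v = 0) (hαβ : α ≤ β) (k : n) :
    ∃ u, u ≠ 0 ∧ u k = 0 ∧ u ⬝ᵥ (A *ᵥ u) ≤ β * (u ⬝ᵥ u) := by
  by_cases hwk : w k = 0
  · exact ⟨w, hw0, hwk, by simpa using dotProduct_mulVec_le_of_mem_span_pair hw hv hwv hαβ 1 0⟩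
  refine ⟨v k • w + (-w k) • v, fun h0 => ?_, by simp [mul_comm],
    dotProduct_mulVec_le_of_mem_span_pair hw hv hwv hαβ _ _⟩
  have := congrArg (· ⬝ᵥ v) h0
  simp [add_dotProduct, hwv, hwk, dotProduct_self_eq_zero, hv0] at this

end

variable {n : Type*} [Fintype n] [DecidableEq n]

theorem IsHermitian.mul_dotProduct_self_le {A : Matrix n n ℝ} (hA : A.IsHermitian)
    {μ : ℝ} (hμ : ∀ i, μ ≤ hA.eigenvalues i) (x : n → ℝ) :
    μ * (x ⬝ᵥ x) ≤ x ⬝ᵥ (A *ᵥ x) := by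
  have hsub : (A - algebraMap ℝ _ μ).PosSemidef := by
    refine posSemidef_iff_isHermitian_and_spectrum_nonneg.mpr
      ⟨hA.sub (by rw [algebraMap_eq_diagonal]; exact isHermitian_diagonal _), ?_⟩
    rw [← spectrum.sub_singleton_eq, hA.spectrum_real_eq_range_eigenvalues]
    rintro _ ⟨_, ⟨i, rfl⟩, _, rfl, rfl⟩
    exact sub_nonneg.mpr (hμ i)
  simpa [Algebra.algebraMap_eq_smul_one, sub_mulVec, smul_mulVec, sub_nonneg] using
    hsub.dotProduct_mulVec_nonneg x

theorem IsHermitian.ofLp_eigenvectorBasis_ne_zero {A : Matrix n n ℝ} (hA : A.IsHermitian)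
    (i : n) : ⇑(hA.eigenvectorBasis i) ≠ 0 := by
  simpa using hA.eigenvectorBasis.orthonormal.ne_zero i

theorem IsHermitian.ofLp_eigenvectorBasis_dotProduct_eq_zero {A : Matrix n n ℝ}
    (hA : A.IsHermitian) {i j : n} (hij : i ≠ j) :
    ⇑(hA.eigenvectorBasis i) ⬝ᵥ ⇑(hA.eigenvectorBasis j) = 0 := by
  simpa [EuclideanSpace.inner_eq_star_dotProduct, dotProduct_comm] using
    hA.eigenvectorBasis.orthonormal.2 hij

theorem dotProduct_single_mulVec (k : n) (h : ℝ) (x : n → ℝ) :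
    x ⬝ᵥ (single k k h *ᵥ x) = h * x k ^ 2 := by
  simp only [single_mulVec_eq, dotProduct_smul, dotProduct_single, smul_eq_mul, mul_one]
  ring

theorem single_mulVec_of_apply_eq_zero (k : n) (h : ℝ) {x : n → ℝ} (hx : x k = 0) :
    single k k h *ᵥ x = 0 := by
  simp [single_mulVec_eq, hx]

theorem PosSemidef.posDef_add_single {L : Matrix n n ℝ} (hL : L.PosSemidef) {k : n}
    (hk : ∀ u, L *ᵥ u = 0 → u k = 0 → u = 0) {h : ℝ} (hh : 0 < h) :
    (L + single k k h).PosDef := by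
  refine .of_dotProduct_mulVec_pos (hL.isHermitian.add (by simp [IsHermitian])) fun x hx => ?_
  have hLx : 0 ≤ x ⬝ᵥ (L *ᵥ x) := by simpa using hL.dotProduct_mulVec_nonneg x
  have hxk : 0 ≤ h * x k ^ 2 := by positivity
  rw [star_trivial, add_mulVec, dotProduct_add, dotProduct_single_mulVec]
  by_contra! hle
  refine hx (hk x ((hL.dotProduct_mulVec_zero_iff x).mp ?_) ?_)
  · simpa using le_antisymm (by linarith) hLx
  · simpa [hh.ne'] using le_antisymm (by linarith) hxk

theorem IsHermitian.le_eigenvalues_of_add_single {A : Matrix n n ℝ} (hA : A.IsHermitian)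
    {k : n} {h : ℝ} (hAk : (A + single k k h).IsHermitian) {μ : ℝ}
    (hμ : ∀ i, μ ≤ hAk.eigenvalues i) {i j : n} (hij : i ≠ j)
    (hle : hA.eigenvalues i ≤ hA.eigenvalues j) :
    μ ≤ hA.eigenvalues j := by
  obtain ⟨u, hu0, huk, hu⟩ := exists_apply_eq_zero_dotProduct_mulVec_le
    (hA.mulVec_eigenvectorBasis i) (hA.mulVec_eigenvectorBasis j)
    (hA.ofLp_eigenvectorBasis_ne_zero i) (hA.ofLp_eigenvectorBasis_ne_zero j)
    (hA.ofLp_eigenvectorBasis_dotProduct_eq_zero hij) hle k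
  have hrayleigh := hAk.mul_dotProduct_self_le hμ u
  rw [add_mulVec, single_mulVec_of_apply_eq_zero k h huk, add_zero] at hrayleigh
  have huu : 0 < u ⬝ᵥ u := lt_of_le_of_ne (by simpa using dotProduct_self_star_nonneg u)
    (Ne.symm (mt dotProduct_self_eq_zero.mp hu0))
  exact le_of_mul_le_mul_right (hrayleigh.trans hu) huu

end Matrix

/-- Listing the eigenvalues of the Laplacian `L` and of the
perturbed Laplacian `L + Δ` in nondecreasing order, the smallest eigenvalue of
`L + Δ` is strictly positive and at most the second-smallest eigenvalue
(algebraic connectivity) of `L`. -/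
theorem perturbed_laplacian_smallest_eigenvalue_bounds
    (N : ℕ) (hN : 2 ≤ N) (L : Matrix (Fin N) (Fin N) ℝ)
    (hpsd : L.PosSemidef)
    (hker : ∀ u : Fin N → ℝ, L *ᵥ u = 0 → ∃ c : ℝ, u = fun _ => c)
    (k : Fin N) (h : ℝ) (hh : 0 < h)
    (hLh : L.IsHermitian)
    (hLΔh : (L + Matrix.single k k h).IsHermitian)
    (ev ev' : Fin N → ℝ)
    (hev_mono : Monotone ev) (hev'_mono : Monotone ev')
    (hev : ∃ σ : Equiv.Perm (Fin N), ev = hLh.eigenvalues ∘ σ)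
    (hev' : ∃ σ : Equiv.Perm (Fin N), ev' = hLΔh.eigenvalues ∘ σ) :
    0 < ev' ⟨0, by omega⟩ ∧ ev' ⟨0, by omega⟩ ≤ ev ⟨1, by omega⟩ := by
  obtain ⟨σ, rfl⟩ := hev
  obtain ⟨τ, rfl⟩ := hev'
  have hk : ∀ u, L *ᵥ u = 0 → u k = 0 → u = 0 := fun u hu huk => by
    obtain ⟨c, rfl⟩ := hker u hu
    exact funext fun _ => huk
  have hmin : ∀ i, hLΔh.eigenvalues (τ ⟨0, by omega⟩) ≤ hLΔh.eigenvalues i := fun i => by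
    simpa using hev'_mono (show (⟨0, by omega⟩ : Fin N) ≤ τ.symm i from Nat.zero_le _)
  exact ⟨(hpsd.posDef_add_single hk hh).eigenvalues_pos _,
    hLh.le_eigenvalues_of_add_single hLΔh hmin (σ.injective.ne (by simp [Fin.ext_iff]))
      (hev_mono (show (⟨0, by omega⟩ : Fin N) ≤ ⟨1, by omega⟩ from Nat.zero_le _))⟩
end

section
/- Let N ≥ 1, let L be a real symmetric N×N positive semidefinite matrix with L·𝟏 = 0 and kernel exactly the span of 𝟏, let k be an index, h > 0, Δ = h·e_k e_kᵀ. Let P_T > 0, θ > 0, and let δ be a real number with |δ| < θ·P_T/(1 + √N). Define S(t) = (P_T + δ)·𝟏 + exp(−t(L + Δ))·(−δ·𝟏). Then for every t ≥ 0 and every index i, (1 − θ)·P_T ≤ S_i(t) ≤ (1 + θ)·P_T. -/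
open Matrix

/-!
Since `L` and `Δ = h • eₖeₖᵀ` are positive semidefinite, so is `M = L + Δ`. For `t ≥ 0` the spectrum
of `-(t • M)` lies in `(-∞, 0]`, so by the continuous functional calculus `exp (-(t • M))` has L²
operator norm at most `1`. Each entry of
`exp (-(t • M)) *ᵥ (-δ • 𝟏)` is therefore bounded by `‖δ • 𝟏‖₂ = √N |δ|`, so
`|S t i - P_T| ≤ (1 + √N) |δ| < θ P_T`.
-/

theorem Matrix.posSemidef_single_self {n R : Type*} [DecidableEq n] [CommRing R] [PartialOrder R]
    [StarRing R] [StarOrderedRing R] (k : n) {h : R} (hh : 0 ≤ h) :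
    (single k k h).PosSemidef := by
  rw [← diagonal_single]
  exact .diagonal fun j => by by_cases hj : j = k <;> simp [hj, hh]

theorem EuclideanSpace.norm_toLp_const {n : Type*} [Fintype n] (c : ℝ) :
    ‖WithLp.toLp 2 (fun _ : n => c)‖ = √(Fintype.card n) * |c| := by
  rw [EuclideanSpace.norm_eq]
  simp [← Real.sqrt_sq_eq_abs]

section L2OpNorm

open scoped Matrix.Norms.L2Operator

variable {n : Type*} [Fintype n] [DecidableEq n]

theorem Matrix.norm_mulVec_apply_le {m 𝕜 : Type*} [RCLike 𝕜] [Fintype m] (A : Matrix m n 𝕜)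
    (v : n → 𝕜) (i : m) : ‖(A *ᵥ v) i‖ ≤ ‖A‖ * ‖WithLp.toLp 2 v‖ :=
  (PiLp.norm_apply_le (WithLp.toLp 2 (A *ᵥ v)) i).trans (l2_opNorm_mulVec A (WithLp.toLp 2 v))

theorem Matrix.PosSemidef.norm_exp_neg_smul_le_one {M : Matrix n n ℝ} (hM : M.PosSemidef)
    {t : ℝ} (ht : 0 ≤ t) : ‖NormedSpace.exp (-(t • M))‖ ≤ 1 := by
  have htM : (t • M).PosSemidef := hM.smul ht
  have hspec := (posSemidef_iff_isHermitian_and_spectrum_nonneg.mp htM).2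
  rw [← CFC.real_exp_eq_normedSpace_exp htM.1.isSelfAdjoint.neg]
  refine norm_cfc_le zero_le_one fun x hx => ?_
  rw [← spectrum.neg_eq, Set.mem_neg] at hx
  rw [Real.norm_of_nonneg (Real.exp_nonneg x), Real.exp_le_one_iff]
  exact neg_nonneg.mp (hspec hx)

theorem Matrix.PosSemidef.abs_exp_neg_smul_mulVec_apply_le {M : Matrix n n ℝ}
    (hM : M.PosSemidef) {t : ℝ} (ht : 0 ≤ t) (v : n → ℝ) (i : n) :
    |(NormedSpace.exp (-(t • M)) *ᵥ v) i| ≤ ‖WithLp.toLp 2 v‖ :=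
  calc |(NormedSpace.exp (-(t • M)) *ᵥ v) i|
      ≤ ‖NormedSpace.exp (-(t • M))‖ * ‖WithLp.toLp 2 v‖ := norm_mulVec_apply_le _ v i
    _ ≤ ‖WithLp.toLp 2 v‖ :=
      mul_le_of_le_one_left (norm_nonneg _) (hM.norm_exp_neg_smul_le_one ht)

end L2OpNorm

theorem consensus_estimates_bounds_general
    (N : ℕ) (L : Matrix (Fin N) (Fin N) ℝ)
    (hpsd : L.PosSemidef)
    (k : Fin N) (h : ℝ) (hh : 0 < h)
    (PT θ δ : ℝ)
    (hδ : |δ| < θ * PT / (1 + Real.sqrt N))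
    (S : ℝ → Fin N → ℝ)
    (hS : S = fun t =>
      (fun _ => PT + δ) +
        NormedSpace.exp (-(t • (L + Matrix.single k k h))) *ᵥ (fun _ => -δ)) :
    ∀ t : ℝ, 0 ≤ t → ∀ i : Fin N,
      (1 - θ) * PT ≤ S t i ∧ S t i ≤ (1 + θ) * PT := by
  intro t ht i
  set x := NormedSpace.exp (-(t • (L + Matrix.single k k h))) *ᵥ (fun _ => -δ)
  have hx : |x i| ≤ √N * |δ| := by
    have := (hpsd.add (posSemidef_single_self k hh.le)).abs_exp_neg_smul_mulVec_apply_le ht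
      (fun _ => -δ) i
    rwa [EuclideanSpace.norm_toLp_const, Fintype.card_fin, abs_neg] at this
  have hδx : |δ + x i| < θ * PT :=
    calc |δ + x i| ≤ (1 + √N) * |δ| := by linarith [abs_add_le δ (x i)]
      _ < θ * PT := (lt_div_iff₀' (by positivity)).mp hδ
  have hSi : S t i = PT + (δ + x i) := by
    simp only [hS, x, Pi.add_apply]
    ring
  rw [hSi]
  constructor <;> linarith [abs_lt.mp hδx]

/-- If `|δ| < θ·P_T/(1+√N)` then every component of the consensus
trajectory `S(t) = (P_T+δ)·𝟏 + exp(−t(L+Δ))·(−δ·𝟏)` stays in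
`[(1−θ)P_T, (1+θ)P_T]` for all `t ≥ 0`. -/
theorem consensus_estimates_bounds
    (N : ℕ) (hN : 1 ≤ N) (L : Matrix (Fin N) (Fin N) ℝ)
    (hsymm : L.IsSymm) (hpsd : L.PosSemidef)
    (hL1 : L *ᵥ (fun _ => (1 : ℝ)) = 0)
    (hker : ∀ u : Fin N → ℝ, L *ᵥ u = 0 → ∃ c : ℝ, u = fun _ => c)
    (k : Fin N) (h : ℝ) (hh : 0 < h)
    (PT θ δ : ℝ) (hPT : 0 < PT) (hθ : 0 < θ)
    (hδ : |δ| < θ * PT / (1 + Real.sqrt N))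
    (S : ℝ → Fin N → ℝ)
    (hS : S = fun t =>
      (fun _ => PT + δ) +
        NormedSpace.exp (-(t • (L + Matrix.single k k h))) *ᵥ (fun _ => -δ)) :
    ∀ t : ℝ, 0 ≤ t → ∀ i : Fin N,
      (1 - θ) * PT ≤ S t i ∧ S t i ≤ (1 + θ) * PT :=
  consensus_estimates_bounds_general N L hpsd k h hh PT θ δ hδ S hS
end

section
/- Let N ≥ 1, let L be a real symmetric N×N positive semidefinite matrix with L·𝟏 = 0 and kernel exactly the span of 𝟏, let k be an index, h > 0, Δ = h·e_k e_kᵀ, let δ be real, and let P_{1,max}, …, P_{N,max} be real numbers with P_T = Σ_{i=1}^N P_{i,max} > 0. Define S(t) = (P_T + δ)·𝟏 + exp(−t(L + Δ))·(−δ·𝟏), and for P_L real define the Strategy-3 mismatch E(t) = P_L·( −P_T/S_k(t) + Σ_{i=1}^N P_{i,max}/S_i(t) ). Then E(0) = 0, and E is differentiable at t = 0 with derivative E′(0) = h·δ·P_L·(P_T − P_{k,max})/P_T². In particular, if h, P_L > 0, δ ≠ 0 and P_{k,max} < P_T, then E′(0) ≠ 0 and Strategy 3 also produces a transient power mismatch.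 -/
/-!
Along the trajectory `S(t) = (P_T + δ)𝟏 + exp(-t(L + Δ))(-δ𝟏)` every estimate starts at `P_T`,
and since `L𝟏 = 0` the only drift at `t = 0` is `-(L + Δ)(-δ𝟏) = hδ e_k`: only generator `k`'s
estimate moves to first order. Differentiating the quotients then leaves
`E'(0) = P_L · hδ (P_T - P_{k,max}) / P_T²`, the contributions of `-P_T/S_k` and `P_{k,max}/S_k`.
-/

open Matrix

section
attribute [local instance] Matrix.linftyOpNormedRing Matrix.linftyOpNormedAlgebra

variable {n : Type*} [Fintype n] [DecidableEq n]

theorem Matrix.hasDerivAt_exp_smul_mulVec_zero (A : Matrix n n ℝ) (v : n → ℝ) :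
    HasDerivAt (fun t : ℝ => NormedSpace.exp (t • A) *ᵥ v) (A *ᵥ v) 0 := by
  have hexp := hasDerivAt_exp_smul_const (𝕂 := ℝ) A 0
  rw [zero_smul, NormedSpace.exp_zero, one_mul] at hexp
  exact (LinearMap.toContinuousLinearMap ((mulVecBilin ℝ ℝ).flip v)).hasFDerivAt.comp_hasDerivAt
    0 hexp

end

theorem Matrix.add_single_mulVec_const {n : Type*} [Fintype n] [DecidableEq n]
    {L : Matrix n n ℝ} (hL : L *ᵥ (fun _ => (1 : ℝ)) = 0) (k : n) (h c : ℝ) :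
    (L + single k k h) *ᵥ (fun _ => c) = Pi.single k (h * c) := by
  have hc : (fun _ => c : n → ℝ) = c • fun _ => 1 := by ext; simp
  rw [add_mulVec, single_mulVec, hc, mulVec_smul, hL, smul_zero, zero_add]
  rfl

theorem hasDerivAt_const_add_exp_neg_smul_mulVec_const {n : Type*} [Fintype n] [DecidableEq n]
    {L : Matrix n n ℝ} (hL : L *ᵥ (fun _ => (1 : ℝ)) = 0) (k : n) (h a δ : ℝ) :
    HasDerivAt
      (fun t : ℝ => (fun _ => a) + NormedSpace.exp (-(t • (L + single k k h))) *ᵥ (fun _ => -δ))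
      (Pi.single k (h * δ)) 0 := by
  have hderiv := (hasDerivAt_exp_smul_mulVec_zero (-(L + single k k h)) fun _ => -δ).const_add
    (fun _ => a)
  simp only [smul_neg, neg_mulVec, add_single_mulVec_const hL, mul_neg, Pi.single_neg,
    neg_neg] at hderiv
  exact hderiv

theorem hasDerivAt_sum_div_of_eq_const {ι : Type*} [Fintype ι] {S : ℝ → ι → ℝ}
    {S' : ι → ℝ} {x c : ℝ} (P : ι → ℝ) (hS : HasDerivAt S S' x) (hSx : S x = fun _ => c)
    (hc : c ≠ 0) :
    HasDerivAt (fun t => ∑ i, P i / S t i) (-(P ⬝ᵥ S') / c ^ 2) x := by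
  have hterm (i : ι) : HasDerivAt (fun t => P i / S t i) (-(P i * S' i) / c ^ 2) x := by
    refine ((hasDerivAt_const x (P i)).fun_div (hasDerivAt_pi.mp hS i) ?_).congr_deriv ?_
    all_goals simp only [hSx]
    · exact hc
    · ring
  refine (HasDerivAt.fun_sum fun i _ => hterm i).congr_deriv ?_
  simp only [dotProduct, ← Finset.sum_div, Finset.sum_neg_distrib]

theorem hasDerivAt_neg_div_add_sum_div_of_eq_const {ι : Type*} [Fintype ι] [DecidableEq ι]
    {S : ℝ → ι → ℝ} {x c s : ℝ} {k : ι} (P : ι → ℝ) (hS : HasDerivAt S (Pi.single k s) x)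
    (hSx : S x = fun _ => c) (hc : c ≠ 0) :
    HasDerivAt (fun t => -(c / S t k) + ∑ i, P i / S t i) (s * (c - P k) / c ^ 2) x := by
  have hk := ((hasDerivAt_const x c).fun_div (hasDerivAt_pi.mp hS k)
    (by rw [hSx]; exact hc)).fun_neg
  refine (hk.fun_add (hasDerivAt_sum_div_of_eq_const P hS hSx hc)).congr_deriv ?_
  simp only [hSx, dotProduct_single, Pi.single_eq_same]
  ring

theorem strategy3_transient_mismatch_general
    (N : ℕ) (L : Matrix (Fin N) (Fin N) ℝ)
    (hL1 : L *ᵥ (fun _ => (1 : ℝ)) = 0)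
    (k : Fin N) (h : ℝ) (hh : 0 < h) (δ : ℝ)
    (Pmax : Fin N → ℝ) (PT : ℝ) (hPT : PT = ∑ i, Pmax i) (hPTpos : 0 < PT)
    (PL : ℝ)
    (S : ℝ → Fin N → ℝ)
    (hS : S = fun t =>
      (fun _ => PT + δ) +
        NormedSpace.exp (-(t • (L + Matrix.single k k h))) *ᵥ (fun _ => -δ))
    (E : ℝ → ℝ)
    (hE : E = fun t => PL * (-(PT / S t k) + ∑ i, Pmax i / S t i)) :
    E 0 = 0 ∧
      HasDerivAt E (h * δ * PL * (PT - Pmax k) / PT ^ 2) 0 ∧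
      (0 < PL → δ ≠ 0 → Pmax k < PT →
        h * δ * PL * (PT - Pmax k) / PT ^ 2 ≠ 0) := by
  have hS0 : S 0 = fun _ => PT := by
    ext i
    simp only [hS, zero_smul, neg_zero, NormedSpace.exp_zero, one_mulVec, Pi.add_apply]
    ring
  have hSderiv : HasDerivAt S (Pi.single k (h * δ)) 0 :=
    hS ▸ hasDerivAt_const_add_exp_neg_smul_mulVec_const hL1 k h (PT + δ) δ
  refine ⟨?_, ?_, ?_⟩
  · simp only [hE, hS0, ← Finset.sum_div, ← hPT, div_self hPTpos.ne', neg_add_cancel, mul_zero]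
  · rw [hE]
    refine ((hasDerivAt_neg_div_add_sum_div_of_eq_const Pmax hSderiv hS0
      hPTpos.ne').const_mul PL).congr_deriv ?_
    ring
  · intro hPL hδ hlt
    have := sub_pos.mpr hlt
    positivity

/-- For the Strategy-3 mismatch
`E(t) = P_L·(−P_T/S_k(t) + Σ_i P_{i,max}/S_i(t))` along the consensus trajectory,
`E(0) = 0` and `E′(0) = h·δ·P_L·(P_T − P_{k,max})/P_T²`, which is nonzero when
`P_L > 0`, `δ ≠ 0` and `P_{k,max} < P_T`. -/
theorem strategy3_transient_mismatch
    (N : ℕ) (hN : 1 ≤ N) (L : Matrix (Fin N) (Fin N) ℝ)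
    (hsymm : L.IsSymm) (hpsd : L.PosSemidef)
    (hL1 : L *ᵥ (fun _ => (1 : ℝ)) = 0)
    (hker : ∀ u : Fin N → ℝ, L *ᵥ u = 0 → ∃ c : ℝ, u = fun _ => c)
    (k : Fin N) (h : ℝ) (hh : 0 < h) (δ : ℝ)
    (Pmax : Fin N → ℝ) (PT : ℝ) (hPT : PT = ∑ i, Pmax i) (hPTpos : 0 < PT)
    (PL : ℝ)
    (S : ℝ → Fin N → ℝ)
    (hS : S = fun t =>
      (fun _ => PT + δ) +
        NormedSpace.exp (-(t • (L + Matrix.single k k h))) *ᵥ (fun _ => -δ))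
    (E : ℝ → ℝ)
    (hE : E = fun t => PL * (-(PT / S t k) + ∑ i, Pmax i / S t i)) :
    E 0 = 0 ∧
      HasDerivAt E (h * δ * PL * (PT - Pmax k) / PT ^ 2) 0 ∧
      (0 < PL → δ ≠ 0 → Pmax k < PT →
        h * δ * PL * (PT - Pmax k) / PT ^ 2 ≠ 0) :=
  strategy3_transient_mismatch_general N L hL1 k h hh δ Pmax PT hPT hPTpos PL S hS E hE
end
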